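/- (Theorem 4.1.) For any δ ∈ (0,1), any side information S : {1,…,N} → [0,1], any predictable sequence (β_t) with β_t ∈ [−1,1], any sampling strategy (q_t), and any family of predictable betting strategies (λ_t(m)) for m ∈ [0,1] such that each factor 1 + λ_t(m)(Z_t + β_t U_t − μ_t(m)) is almost surely nonnegative, the sets C_t = {m ∈ [0,1] : W̃_t(m) < 1/δ}, where W̃_t(m) = Π_{s=1}^t (1 + λ_s(m)(Z_s + β_s U_s − μ_s(m))) and U_t = S(I_t) − Σ_{i∈N_t} q_t(i) S(i), form a (1−δ)-confidence sequence for m*: P(∃ t ∈ {1,…,N} : m* ∉ C_t) ≤ δ. -/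

import Mathlib

open MeasureTheory Finset

namespace RLFA

variable {Ω : Type*}

/-- `remaining I t ω` is the set `N_t = {1,…,N} \ {I_1, …, I_{t-1}}` of indices not yet
sampled before time `t`. -/
def remaining {N : ℕ} (I : ℕ → Ω → Fin N) (t : ℕ) (ω : Ω) : Finset (Fin N) :=
  Finset.univ \ (Finset.Icc 1 (t - 1)).image fun j => I j ω

/-- The filtration `F_t = σ(I_1, …, I_t)`. -/
def filt {N : ℕ} (I : ℕ → Ω → Fin N) (t : ℕ) : MeasurableSpace Ω :=
  ⨆ j ∈ Finset.Icc 1 t, MeasurableSpace.comap (I j) ⊤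

/-- The importance-weighted observation `Z_t = f(I_t) · π(I_t) / q_t(I_t)`. -/
noncomputable def Zt {N : ℕ} (π f : Fin N → ℝ) (q : ℕ → Ω → Fin N → ℝ)
    (I : ℕ → Ω → Fin N) (t : ℕ) (ω : Ω) : ℝ :=
  f (I t ω) * (π (I t ω) / q t ω (I t ω))

/-- `μ_t(m) = m − Σ_{j=1}^{t−1} π(I_j) f(I_j)`. -/
def muT {N : ℕ} (π f : Fin N → ℝ) (I : ℕ → Ω → Fin N) (m : ℝ) (t : ℕ) (ω : Ω) : ℝ :=
  m - ∑ j ∈ Finset.Icc 1 (t - 1), π (I j ω) * f (I j ω)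

/-- The control variate `U_t = S(I_t) − Σ_{i ∈ N_t} q_t(i) S(i)`. -/
def Ut {N : ℕ} (S : Fin N → ℝ) (q : ℕ → Ω → Fin N → ℝ) (I : ℕ → Ω → Fin N)
    (t : ℕ) (ω : Ω) : ℝ :=
  S (I t ω) - ∑ i ∈ remaining I t ω, q t ω i * S i

/-- The control-variate wealth process
`W̃_t(m) = Π_{s=1}^t (1 + λ_s(m)(Z_s + β_s U_s − μ_s(m)))`. -/
noncomputable def wealthCV {N : ℕ} (π f S : Fin N → ℝ) (q : ℕ → Ω → Fin N → ℝ)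
    (I : ℕ → Ω → Fin N) (lam β : ℕ → Ω → ℝ) (m : ℝ) (t : ℕ) (ω : Ω) : ℝ :=
  ∏ s ∈ Finset.Icc 1 t,
    (1 + lam s ω * (Zt π f q I s ω + β s ω * Ut S q I s ω - muT π f I m s ω))

end RLFA

/-!
Under the sampling law `q_t`, the importance-weighted `Z_t` has conditional mean `μ_t(m*)`, the
weight still unsampled, and the control variate `U_t` has conditional mean `0`. Hence every
betting factor of `W̃_t(m*)` has conditional mean one, and `W̃_t(m*)` is a nonnegative martingale
of mean one. Since `m* ∉ C_t` means `W̃_t(m*) ≥ 1/δ`, Ville's inequality (Doob's maximal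
inequality for `t ≤ N`) bounds the probability of ever leaving the confidence sets by `δ`.
Integrability of the wealth comes for free: a non-integrable wealth would have conditional
expectation `0` by convention, contradicting mean one.
-/

open Filter

variable {Ω : Type*}

lemma measurable_apply_comp {ι β : Type*} [Countable ι] [MeasurableSpace ι]
    [MeasurableSingletonClass ι] [MeasurableSpace β] {m : MeasurableSpace Ω} {G : Ω → ι → β}
    (hG : ∀ i, Measurable fun ω => G ω i) {J : Ω → ι} (hJ : Measurable J) :
    Measurable fun ω => G ω (J ω) :=
  (measurable_from_prod_countable_left (f := fun p : Ω × ι => G p.1 p.2) hG).comp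
    (measurable_id.prodMk hJ)

namespace MeasureTheory

-- Uses the convention `μ[X | m] = 0` for non-integrable `X`.
lemma integrable_of_condExp_ae_eq {m m0 : MeasurableSpace Ω} {μ : Measure Ω} {X Y : Ω → ℝ}
    (h : μ[X | m] =ᵐ[μ] Y) (hY : ∫ ω, Y ω ∂μ ≠ 0) : Integrable X μ := by
  by_contra hX
  rw [condExp_of_not_integrable hX] at h
  exact hY (by rw [← integral_congr_ae h]; simp)

section FiniteHorizon

variable {m0 : MeasurableSpace Ω} {μ : Measure Ω} [IsFiniteMeasure μ] {𝒢 : Filtration ℕ m0}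
  {W : ℕ → Ω → ℝ} {N : ℕ}

-- Frozen after `N` and clipped at `0` (an a.e. change), `W` becomes an everywhere nonnegative
-- martingale indexed by all of `ℕ`, as Doob's maximal inequality requires.
lemma martingale_max_zero_min (hadp : ∀ t ≤ N, StronglyMeasurable[𝒢 t] (W t))
    (hint : ∀ t ≤ N, Integrable (W t) μ) (hnonneg : ∀ t ≤ N, 0 ≤ᵐ[μ] W t)
    (hmart : ∀ t < N, μ[W (t + 1) | 𝒢 t] =ᵐ[μ] W t) :
    Martingale (fun n ω => max (W (min n N) ω) 0) 𝒢 μ := by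
  have hW : ∀ n, (fun ω => max (W (min n N) ω) 0) =ᵐ[μ] W (min n N) := fun n =>
    (hnonneg _ (min_le_right n N)).mono fun ω h => max_eq_left h
  refine martingale_nat (fun n => ?_) (fun n => ?_) (fun n => ?_)
  · exact (((hadp _ (min_le_right n N)).mono (𝒢.mono (min_le_left n N))).measurable.max
      measurable_const).stronglyMeasurable
  · exact (hint _ (min_le_right n N)).sup (integrable_zero Ω ℝ μ)
  · refine (hW n).trans (EventuallyEq.trans ?_ (condExp_congr_ae (hW (n + 1)).symm))
    rcases lt_or_ge n N with hn | hn
    · rw [min_eq_left hn.le, min_eq_left hn]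
      exact (hmart n hn).symm
    · rw [min_eq_right hn, min_eq_right (hn.trans n.le_succ)]
      exact (condExp_of_stronglyMeasurable (𝒢.le n) ((hadp N le_rfl).mono (𝒢.mono hn))
        (hint N le_rfl)).symm.eventuallyEq

theorem measure_exists_ge_le_integral_div (hadp : ∀ t ≤ N, StronglyMeasurable[𝒢 t] (W t))
    (hint : ∀ t ≤ N, Integrable (W t) μ) (hnonneg : ∀ t ≤ N, 0 ≤ᵐ[μ] W t)
    (hmart : ∀ t < N, μ[W (t + 1) | 𝒢 t] =ᵐ[μ] W t) {c : ℝ} (hc : 0 < c) :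
    μ {ω | ∃ t ≤ N, c ≤ W t ω} ≤ ENNReal.ofReal ((∫ ω, W N ω ∂μ) / c) := by
  set f : ℕ → Ω → ℝ := fun n ω => max (W (min n N) ω) 0
  have hf : Martingale f 𝒢 μ := martingale_max_zero_min hadp hint hnonneg hmart
  set A := {ω | (c.toNNReal : ℝ) ≤ (range (N + 1)).sup' nonempty_range_add_one fun k => f k ω}
  have hmax : c.toNNReal * μ A ≤ ENNReal.ofReal (∫ ω in A, f N ω ∂μ) :=
    maximal_ineq hf.submartingale (fun n ω => le_max_right _ _) N
  have hsub : {ω | ∃ t ≤ N, c ≤ W t ω} ⊆ A := by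
    rintro ω ⟨t, htN, hct⟩
    refine (Real.coe_toNNReal c hc.le).trans_le (le_sup'_of_le _ (mem_range_succ_iff.mpr htN) ?_)
    simp only [f, min_eq_left htN]
    exact hct.trans (le_max_left _ _)
  have hA : ∫ ω in A, f N ω ∂μ ≤ ∫ ω, W N ω ∂μ := calc
    _ ≤ ∫ ω, f N ω ∂μ :=
      setIntegral_le_integral (hf.integrable N) (ae_of_all _ fun ω => le_max_right _ _)
    _ = ∫ ω, W N ω ∂μ := integral_congr_ae <| (hnonneg N le_rfl).mono fun ω h => by
      simp only [f, min_self]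
      exact max_eq_left h
  rw [ENNReal.ofReal_div_of_pos hc, ENNReal.le_div_iff_mul_le (by simp [hc]) (by simp), mul_comm]
  exact (mul_le_mul_right (measure_mono hsub) _).trans
    (hmax.trans (ENNReal.ofReal_le_ofReal hA))

end FiniteHorizon

end MeasureTheory

namespace RLFA

variable {N : ℕ}

lemma comap_le_filt (I : ℕ → Ω → Fin N) {s t : ℕ} (h1 : 1 ≤ s) (h2 : s ≤ t) :
    MeasurableSpace.comap (I s) ⊤ ≤ filt I t :=
  le_iSup₂ (f := fun j (_ : j ∈ Icc 1 t) => MeasurableSpace.comap (I j) ⊤) s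
    (mem_Icc.mpr ⟨h1, h2⟩)

lemma filt_mono (I : ℕ → Ω → Fin N) : Monotone (filt I) := fun _ _ h =>
  iSup₂_le fun _ hj => comap_le_filt I (mem_Icc.mp hj).1 ((mem_Icc.mp hj).2.trans h)

lemma filt_le [m0 : MeasurableSpace Ω] {I : ℕ → Ω → Fin N} (hI : ∀ t, Measurable (I t))
    (t : ℕ) : filt I t ≤ m0 :=
  iSup₂_le fun j _ => (hI j).comap_le

def samplingFiltration [m0 : MeasurableSpace Ω] {I : ℕ → Ω → Fin N}
    (hI : ∀ t, Measurable (I t)) : Filtration ℕ m0 :=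
  ⟨filt I, filt_mono I, filt_le hI⟩

lemma measurable_filt (I : ℕ → Ω → Fin N) {s t : ℕ} (h1 : 1 ≤ s) (h2 : s ≤ t) :
    Measurable[filt I t] (I s) :=
  measurable_iff_comap_le.mpr (comap_le_filt I h1 h2)

def IsPredictable (I : ℕ → Ω → Fin N) (X : ℕ → Ω → ℝ) : Prop :=
  ∀ t, 1 ≤ t → t ≤ N → StronglyMeasurable[filt I (t - 1)] (X t)

-- `condExp_eq` says that, given `F_{t-1}`, the index `I_t` is drawn from `q_t` on `N_t`.
structure IsSamplingScheme [MeasurableSpace Ω] (μ : Measure Ω) (I : ℕ → Ω → Fin N)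
    (q : ℕ → Ω → Fin N → ℝ) : Prop where
  measurable : ∀ t, Measurable (I t)
  predictable_q : ∀ i, IsPredictable I fun t ω => q t ω i
  q_pos : ∀ t ω, 1 ≤ t → t ≤ N → ∀ i ∈ remaining I t ω, 0 < q t ω i
  sum_q : ∀ t ω, 1 ≤ t → t ≤ N → ∑ i ∈ remaining I t ω, q t ω i = 1
  mem_remaining : ∀ t ω, 1 ≤ t → t ≤ N → I t ω ∈ remaining I t ω
  condExp_eq : ∀ t, 1 ≤ t → t ≤ N → ∀ G : Ω → Fin N → ℝ,
    (∀ i, StronglyMeasurable[filt I (t - 1)] fun ω => G ω i) →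
    μ[(fun ω => G ω (I t ω)) | filt I (t - 1)]
      =ᵐ[μ] fun ω => ∑ i ∈ remaining I t ω, q t ω i * G ω i

lemma measurableSet_mem_remaining (I : ℕ → Ω → Fin N) (t : ℕ) (i : Fin N) :
    MeasurableSet[filt I (t - 1)] {ω | i ∈ remaining I t ω} := by
  have h : {ω | i ∈ remaining I t ω} = ⋂ j ∈ Icc 1 (t - 1), (I j ⁻¹' {i})ᶜ := by
    ext ω
    simp [remaining]
  rw [h]
  refine MeasurableSet.biInter (Finset.countable_toSet _) fun j hj => ?_
  exact (measurable_filt I (mem_Icc.mp hj).1 (mem_Icc.mp hj).2 (measurableSet_singleton i)).compl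

lemma measurable_sum_remaining (I : ℕ → Ω → Fin N) (t : ℕ) {g : Ω → Fin N → ℝ}
    (hg : ∀ i, Measurable[filt I (t - 1)] fun ω => g ω i) :
    Measurable[filt I (t - 1)] fun ω => ∑ i ∈ remaining I t ω, g ω i := by
  have h : (fun ω => ∑ i ∈ remaining I t ω, g ω i)
      = fun ω => ∑ i, if i ∈ remaining I t ω then g ω i else 0 := by
    simp_rw [sum_ite_mem, univ_inter]
  rw [h]
  exact Finset.measurable_sum _ fun i _ =>
    Measurable.ite (measurableSet_mem_remaining I t i) (hg i) measurable_const

lemma measurable_muT (π f : Fin N → ℝ) (I : ℕ → Ω → Fin N) (m : ℝ) (t : ℕ) :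
    Measurable[filt I (t - 1)] (muT π f I m t) := by
  refine measurable_const.sub (Finset.measurable_sum _ fun j hj => ?_)
  exact (measurable_from_top (f := fun i => π i * f i)).comp
    (measurable_filt I (mem_Icc.mp hj).1 (mem_Icc.mp hj).2)

-- The betting factor at time `t` if index `i` were drawn: `W̃_t = ∏_{s ≤ t} wealthFactor s (I_s)`.
noncomputable def wealthFactor (π f S : Fin N → ℝ) (q : ℕ → Ω → Fin N → ℝ) (I : ℕ → Ω → Fin N)
    (L B : ℕ → Ω → ℝ) (m : ℝ) (t : ℕ) (ω : Ω) (i : Fin N) : ℝ :=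
  1 + L t ω * (f i * (π i / q t ω i) + B t ω * (S i - ∑ j ∈ remaining I t ω, q t ω j * S j)
    - muT π f I m t ω)

lemma wealthCV_eq_prod (π f S : Fin N → ℝ) (q : ℕ → Ω → Fin N → ℝ) (I : ℕ → Ω → Fin N)
    (L B : ℕ → Ω → ℝ) (m : ℝ) (t : ℕ) (ω : Ω) :
    wealthCV π f S q I L B m t ω = ∏ s ∈ Icc 1 t, wealthFactor π f S q I L B m s ω (I s ω) :=
  rfl

lemma wealthCV_succ (π f S : Fin N → ℝ) (q : ℕ → Ω → Fin N → ℝ) (I : ℕ → Ω → Fin N)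
    (L B : ℕ → Ω → ℝ) (m : ℝ) (t : ℕ) (ω : Ω) :
    wealthCV π f S q I L B m (t + 1) ω =
      wealthCV π f S q I L B m t ω * wealthFactor π f S q I L B m (t + 1) ω (I (t + 1) ω) := by
  simp only [wealthCV_eq_prod]
  exact prod_Icc_succ_top (Nat.le_add_left 1 t) _

section WithoutReplacement

variable {I : ℕ → Ω → Fin N} {t : ℕ} {ω : Ω}

lemma ne_of_mem_remaining {s : ℕ} (h : I t ω ∈ remaining I t ω) (hs : 1 ≤ s) (hst : s < t) :
    I s ω ≠ I t ω := by
  simp only [remaining, Finset.mem_sdiff, Finset.mem_image, Finset.mem_Icc] at h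
  exact fun heq => h.2 ⟨s, ⟨hs, by omega⟩, heq⟩

lemma sum_remaining_eq_sub (hI : ∀ s, 1 ≤ s → s < t → I s ω ∈ remaining I s ω)
    (g : Fin N → ℝ) :
    ∑ i ∈ remaining I t ω, g i = ∑ i, g i - ∑ j ∈ Icc 1 (t - 1), g (I j ω) := by
  rw [remaining, sum_sdiff_eq_sub (subset_univ _), sum_image]
  intro x hx y hy hxy
  simp only [coe_Icc, Set.mem_Icc] at hx hy
  rcases lt_trichotomy x y with h | h | h
  · exact absurd hxy (ne_of_mem_remaining (hI y hy.1 (by omega)) hx.1 h)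
  · exact h
  · exact absurd hxy.symm (ne_of_mem_remaining (hI x hx.1 (by omega)) hy.1 h)

end WithoutReplacement

variable {π f S : Fin N → ℝ} {q : ℕ → Ω → Fin N → ℝ} {I : ℕ → Ω → Fin N} {L B : ℕ → Ω → ℝ}

-- The bet is fair at `m = m*`: under `q_t`, `Z_t` has mean `Σ_{i ∈ N_t} π(i) f(i) = μ_t(m*)` and
-- `U_t` has mean `0`.
lemma sum_remaining_q_mul_wealthFactor {t : ℕ} {ω : Ω}
    (hq_pos : ∀ i ∈ remaining I t ω, 0 < q t ω i) (hq_sum : ∑ i ∈ remaining I t ω, q t ω i = 1)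
    (hI : ∀ s, 1 ≤ s → s < t → I s ω ∈ remaining I s ω) :
    ∑ i ∈ remaining I t ω, q t ω i * wealthFactor π f S q I L B (∑ i, π i * f i) t ω i = 1 := by
  set c := ∑ j ∈ remaining I t ω, q t ω j * S j
  have hterm : ∀ i ∈ remaining I t ω,
      q t ω i * wealthFactor π f S q I L B (∑ i, π i * f i) t ω i
        = q t ω i + L t ω * (π i * f i) + L t ω * B t ω * (q t ω i * S i - c * q t ω i)
          - L t ω * muT π f I (∑ i, π i * f i) t ω * q t ω i := by
    intro i hi
    have := (hq_pos i hi).ne'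
    simp only [wealthFactor]
    field_simp
    ring
  rw [sum_congr rfl hterm]
  simp only [sum_add_distrib, sum_sub_distrib, ← mul_sum]
  rw [hq_sum, sum_remaining_eq_sub hI fun i => π i * f i, muT]
  ring

lemma measurable_wealthFactor {t : ℕ} (hq : ∀ j, Measurable[filt I (t - 1)] fun ω => q t ω j)
    (hL : Measurable[filt I (t - 1)] (L t)) (hB : Measurable[filt I (t - 1)] (B t)) (m : ℝ)
    (i : Fin N) : Measurable[filt I (t - 1)] fun ω => wealthFactor π f S q I L B m t ω i := by
  have hc := measurable_sum_remaining I t fun j => (hq j).mul (measurable_const (a := S j))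
  exact measurable_const.add (hL.mul
    (((measurable_const.mul (measurable_const.div (hq i))).add
      (hB.mul (measurable_const.sub hc))).sub (measurable_muT π f I m t)))

lemma measurable_wealthCV (hq : ∀ i, IsPredictable I fun t ω => q t ω i) (hL : IsPredictable I L)
    (hB : IsPredictable I B) (m : ℝ) {t : ℕ} (ht : t ≤ N) :
    Measurable[filt I t] (wealthCV π f S q I L B m t) := by
  refine Finset.measurable_prod _ fun s hs => ?_
  obtain ⟨hs1, hst⟩ := mem_Icc.mp hs
  have hsN : s ≤ N := hst.trans ht
  show Measurable[filt I t] fun ω => wealthFactor π f S q I L B m s ω (I s ω)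
  refine measurable_apply_comp (fun i => ?_) (measurable_filt I hs1 hst)
  exact (measurable_wealthFactor (fun j => (hq j s hs1 hsN).measurable)
    (hL s hs1 hsN).measurable (hB s hs1 hsN).measurable m i).mono
    (filt_mono I (by omega)) le_rfl

section Martingale

variable [MeasurableSpace Ω] {μ : Measure Ω}

lemma condExp_mul_wealthFactor (hs : IsSamplingScheme μ I q) (hL : IsPredictable I L)
    (hB : IsPredictable I B) {t : ℕ} (h1 : 1 ≤ t) (ht : t ≤ N) {V : Ω → ℝ}
    (hV : StronglyMeasurable[filt I (t - 1)] V) :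
    μ[fun ω => V ω * wealthFactor π f S q I L B (∑ i, π i * f i) t ω (I t ω) | filt I (t - 1)]
      =ᵐ[μ] V := by
  refine (hs.condExp_eq t h1 ht (fun ω i => V ω * wealthFactor π f S q I L B _ t ω i)
    fun i => (hV.measurable.mul (measurable_wealthFactor
      (fun j => (hs.predictable_q j t h1 ht).measurable) (hL t h1 ht).measurable
      (hB t h1 ht).measurable _ i)).stronglyMeasurable).trans (ae_of_all _ fun ω => ?_)
  have hfair := sum_remaining_q_mul_wealthFactor (π := π) (f := f) (S := S) (L := L) (B := B)
    (hs.q_pos t ω h1 ht) (hs.sum_q t ω h1 ht)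
    (fun s hs1 hst => hs.mem_remaining s ω hs1 (by omega))
  simp_rw [mul_left_comm (q t ω _) (V ω), ← mul_sum, hfair, mul_one]

lemma condExp_wealthCV_succ (hs : IsSamplingScheme μ I q) (hL : IsPredictable I L)
    (hB : IsPredictable I B) {t : ℕ} (ht : t < N) :
    μ[wealthCV π f S q I L B (∑ i, π i * f i) (t + 1) | filt I t]
      =ᵐ[μ] wealthCV π f S q I L B (∑ i, π i * f i) t := by
  rw [funext (wealthCV_succ π f S q I L B _ t)]
  exact condExp_mul_wealthFactor hs hL hB (by omega) ht
    (measurable_wealthCV hs.predictable_q hL hB _ ht.le).stronglyMeasurable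

lemma integrable_wealthCV_and_integral_eq_one [IsProbabilityMeasure μ] (hs : IsSamplingScheme μ I q)
    (hL : IsPredictable I L) (hB : IsPredictable I B) {t : ℕ} (ht : t ≤ N) :
    Integrable (wealthCV π f S q I L B (∑ i, π i * f i) t) μ ∧
      ∫ ω, wealthCV π f S q I L B (∑ i, π i * f i) t ω ∂μ = 1 := by
  induction t with
  | zero =>
    have h0 : wealthCV π f S q I L B (∑ i, π i * f i) 0 = fun _ => 1 :=
      funext fun ω => by simp [wealthCV]
    simp [h0]
  | succ t ih =>
    have h := condExp_wealthCV_succ (π := π) (f := f) (S := S) hs hL hB ht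
    have hint := (ih (by omega)).2
    refine ⟨integrable_of_condExp_ae_eq h (by rw [hint]; exact one_ne_zero), ?_⟩
    rw [← integral_condExp (filt_le hs.measurable t), integral_congr_ae h, hint]

lemma ae_nonneg_wealthCV {m : ℝ}
    (hfac : ∀ s, 1 ≤ s → s ≤ N → ∀ᵐ ω ∂μ, 0 ≤ wealthFactor π f S q I L B m s ω (I s ω))
    {t : ℕ} (ht : t ≤ N) : 0 ≤ᵐ[μ] wealthCV π f S q I L B m t := by
  have h : ∀ᵐ ω ∂μ, ∀ s ∈ Icc 1 t, 0 ≤ wealthFactor π f S q I L B m s ω (I s ω) :=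
    (eventually_all_finset _).mpr fun s hs =>
      hfac s (mem_Icc.mp hs).1 ((mem_Icc.mp hs).2.trans ht)
  filter_upwards [h] with ω hω
  exact prod_nonneg hω

end Martingale

theorem statement10_general
    [m0 : MeasurableSpace Ω] (μ : Measure Ω) [IsProbabilityMeasure μ]
    {N : ℕ}
    (π f : Fin N → ℝ)
    (hπ : ∀ i, π i ∈ Set.Ioc (0 : ℝ) 1) (hπsum : ∑ i, π i = 1)
    (hf : ∀ i, f i ∈ Set.Icc (0 : ℝ) 1)
    (I : ℕ → Ω → Fin N) (hI : ∀ t, Measurable (I t))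
    (q : ℕ → Ω → Fin N → ℝ)
    (hq_meas : ∀ t, 1 ≤ t → t ≤ N → ∀ i,
      StronglyMeasurable[filt I (t - 1)] fun ω => q t ω i)
    (hq_pos : ∀ t ω, 1 ≤ t → t ≤ N → ∀ i ∈ remaining I t ω, 0 < q t ω i)
    (hq_sum : ∀ t ω, 1 ≤ t → t ≤ N → ∑ i ∈ remaining I t ω, q t ω i = 1)
    (hWoR : ∀ t ω, 1 ≤ t → t ≤ N → I t ω ∈ remaining I t ω)
    (hcond : ∀ t, 1 ≤ t → t ≤ N → ∀ G : Ω → Fin N → ℝ,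
      (∀ i, StronglyMeasurable[filt I (t - 1)] fun ω => G ω i) →
      μ[(fun ω => G ω (I t ω)) | filt I (t - 1)]
        =ᵐ[μ] fun ω => ∑ i ∈ remaining I t ω, q t ω i * G ω i)
    (mstar : ℝ) (hmstar : mstar = ∑ i, π i * f i)
    (S : Fin N → ℝ)
    (β : ℕ → Ω → ℝ)
    (hβ_meas : ∀ t, 1 ≤ t → t ≤ N → StronglyMeasurable[filt I (t - 1)] (β t))
    (lam : ℝ → ℕ → Ω → ℝ)
    (hlam_meas : ∀ m ∈ Set.Icc (0 : ℝ) 1, ∀ t, 1 ≤ t → t ≤ N →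
      StronglyMeasurable[filt I (t - 1)] (lam m t))
    (hfac : ∀ m ∈ Set.Icc (0 : ℝ) 1, ∀ t, 1 ≤ t → t ≤ N → ∀ᵐ ω ∂μ,
      0 ≤ 1 + lam m t ω * (Zt π f q I t ω + β t ω * Ut S q I t ω - muT π f I m t ω))
    (δ : ℝ) (hδ : δ ∈ Set.Ioo (0 : ℝ) 1) :
    μ {ω | ∃ t, 1 ≤ t ∧ t ≤ N ∧
        mstar ∉ {m : ℝ | m ∈ Set.Icc (0 : ℝ) 1 ∧ wealthCV π f S q I (lam m) β m t ω < 1 / δ}}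
      ≤ ENNReal.ofReal δ := by
  have hs : IsSamplingScheme μ I q :=
    ⟨hI, fun i t h1 h2 => hq_meas t h1 h2 i, hq_pos, hq_sum, hWoR, hcond⟩
  have hm : mstar ∈ Set.Icc (0 : ℝ) 1 := hmstar ▸
    (convex_Icc 0 1).sum_mem (fun i _ => (hπ i).1.le) hπsum fun i _ => hf i
  subst hmstar
  set W := wealthCV π f S q I (lam (∑ i, π i * f i)) β (∑ i, π i * f i)
  have hW : ∀ t ≤ N, Integrable (W t) μ ∧ ∫ ω, W t ω ∂μ = 1 := fun t ht =>
    integrable_wealthCV_and_integral_eq_one hs (hlam_meas _ hm) hβ_meas ht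
  have hbad : {ω | ∃ t, 1 ≤ t ∧ t ≤ N ∧ ∑ i, π i * f i ∉ {m : ℝ | m ∈ Set.Icc (0 : ℝ) 1 ∧
      wealthCV π f S q I (lam m) β m t ω < 1 / δ}} ⊆ {ω | ∃ t ≤ N, 1 / δ ≤ W t ω} :=
    fun ω ⟨t, _, htN, hout⟩ => ⟨t, htN, not_lt.mp fun hlt => hout ⟨hm, hlt⟩⟩
  calc _ ≤ μ {ω | ∃ t ≤ N, 1 / δ ≤ W t ω} := measure_mono hbad
    _ ≤ ENNReal.ofReal ((∫ ω, W N ω ∂μ) / (1 / δ)) :=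
      measure_exists_ge_le_integral_div (𝒢 := samplingFiltration hI)
        (fun t ht => (measurable_wealthCV hs.predictable_q (hlam_meas _ hm) hβ_meas _
          ht).stronglyMeasurable)
        (fun t ht => (hW t ht).1) (fun t ht => ae_nonneg_wealthCV (hfac _ hm) ht)
        (fun t ht => condExp_wealthCV_succ hs (hlam_meas _ hm) hβ_meas ht) (by simpa using hδ.1)
    _ = ENNReal.ofReal δ := by rw [(hW N le_rfl).2, one_div_one_div]

/-- **Theorem 4.1.** For any `δ ∈ (0,1)`, any side information
`S : {1,…,N} → [0,1]`, any predictable sequence `(β_t)` with `β_t ∈ [−1,1]`, any sampling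
strategy `(q_t)`, and any family of predictable betting strategies `(λ_t(m))` for `m ∈ [0,1]`
such that each factor `1 + λ_t(m)(Z_t + β_t U_t − μ_t(m))` is almost surely nonnegative, the
sets `C_t = {m ∈ [0,1] : W̃_t(m) < 1/δ}` form a `(1−δ)`-confidence sequence for `m*`:
`P(∃ t ∈ {1,…,N} : m* ∉ C_t) ≤ δ`. -/
theorem statement10
    [m0 : MeasurableSpace Ω] (μ : Measure Ω) [IsProbabilityMeasure μ]
    {N : ℕ} (hN : 1 ≤ N)
    (π f : Fin N → ℝ)
    (hπ : ∀ i, π i ∈ Set.Ioc (0 : ℝ) 1) (hπsum : ∑ i, π i = 1)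
    (hf : ∀ i, f i ∈ Set.Icc (0 : ℝ) 1)
    (I : ℕ → Ω → Fin N) (hI : ∀ t, Measurable (I t))
    (q : ℕ → Ω → Fin N → ℝ)
    (hq_meas : ∀ t, 1 ≤ t → t ≤ N → ∀ i,
      StronglyMeasurable[filt I (t - 1)] fun ω => q t ω i)
    (hq_pos : ∀ t ω, 1 ≤ t → t ≤ N → ∀ i ∈ remaining I t ω, 0 < q t ω i)
    (hq_sum : ∀ t ω, 1 ≤ t → t ≤ N → ∑ i ∈ remaining I t ω, q t ω i = 1)
    (hWoR : ∀ t ω, 1 ≤ t → t ≤ N → I t ω ∈ remaining I t ω)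
    (hcond : ∀ t, 1 ≤ t → t ≤ N → ∀ G : Ω → Fin N → ℝ,
      (∀ i, StronglyMeasurable[filt I (t - 1)] fun ω => G ω i) →
      μ[(fun ω => G ω (I t ω)) | filt I (t - 1)]
        =ᵐ[μ] fun ω => ∑ i ∈ remaining I t ω, q t ω i * G ω i)
    (mstar : ℝ) (hmstar : mstar = ∑ i, π i * f i)
    (S : Fin N → ℝ) (hS : ∀ i, S i ∈ Set.Icc (0 : ℝ) 1)
    (β : ℕ → Ω → ℝ)
    (hβ_meas : ∀ t, 1 ≤ t → t ≤ N → StronglyMeasurable[filt I (t - 1)] (β t))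
    (hβ_bdd : ∀ t ω, β t ω ∈ Set.Icc (-1 : ℝ) 1)
    (lam : ℝ → ℕ → Ω → ℝ)
    (hlam_meas : ∀ m ∈ Set.Icc (0 : ℝ) 1, ∀ t, 1 ≤ t → t ≤ N →
      StronglyMeasurable[filt I (t - 1)] (lam m t))
    (hfac : ∀ m ∈ Set.Icc (0 : ℝ) 1, ∀ t, 1 ≤ t → t ≤ N → ∀ᵐ ω ∂μ,
      0 ≤ 1 + lam m t ω * (Zt π f q I t ω + β t ω * Ut S q I t ω - muT π f I m t ω))
    (δ : ℝ) (hδ : δ ∈ Set.Ioo (0 : ℝ) 1) :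
    μ {ω | ∃ t, 1 ≤ t ∧ t ≤ N ∧
        mstar ∉ {m : ℝ | m ∈ Set.Icc (0 : ℝ) 1 ∧ wealthCV π f S q I (lam m) β m t ω < 1 / δ}}
      ≤ ENNReal.ofReal δ :=
  statement10_general (m0 := m0) μ π f hπ hπsum hf I hI q hq_meas hq_pos hq_sum hWoR hcond mstar
    hmstar S β hβ_meas lam hlam_meas hfac δ hδ

end RLFA
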